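/- Let n ≥ p ≥ 1, α = √2/2, β = 1 − √2/2, let ε > 0, and let ζ : ℝ → ℝ be continuously differentiable with ζ(t) = 0 for all t ≥ 2ε. Fix indices 1 ≤ u ≤ n, 1 ≤ v ≤ p. Then the map from ℝ^{n×p} to ℝ^{n×p} defined by X ↦ ζ(‖XᵀX − I_p‖_F²) (E_{uv} − α X E_{uv}ᵀ X − β X Xᵀ E_{uv}) is globally Lipschitz continuous (with respect to the Frobenius norm). -/

import Mathlib

open Matrix

/-- Frobenius norm of a matrix. -/
noncomputable def frobNorm {n p : ℕ} (M : Matrix (Fin n) (Fin p) ℝ) : ℝ :=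
  Real.sqrt (∑ i : Fin n, ∑ j : Fin p, (M i j) ^ 2)

/-- The cutoff diffusion coefficient
`X ↦ ζ(‖XᵀX - I‖_F²) (E_{uv} - α X E_{uv}ᵀ X - β X Xᵀ E_{uv})`
with `α = √2/2`, `β = 1 - √2/2`. -/
noncomputable def cutoffField {n p : ℕ} (ζ : ℝ → ℝ) (u : Fin n) (v : Fin p)
    (X : Matrix (Fin n) (Fin p) ℝ) : Matrix (Fin n) (Fin p) ℝ :=
  ζ (∑ i : Fin p, ∑ j : Fin p, ((Xᵀ * X - (1 : Matrix (Fin p) (Fin p) ℝ)) i j) ^ 2) •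
    (Matrix.single u v (1 : ℝ)
      - (Real.sqrt 2 / 2) • (X * (Matrix.single u v (1 : ℝ))ᵀ * X)
      - (1 - Real.sqrt 2 / 2) • (X * Xᵀ * Matrix.single u v (1 : ℝ)))

/-!
The field is `ζ` of a polynomial times a polynomial map, hence `C¹`. It vanishes once some entry has
`X i j ^ 2 > 2ε + 2`, since `X i j ^ 2 ≤ (XᵀX) j j ≤ ‖XᵀX - I‖_F² + 2`; a compactly supported `C¹`
map is Lipschitz by the mean value inequality. Passing between the entrywise sup norm and the
Frobenius norm costs at most a factor `√(np)`.
-/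

namespace Matrix

section ContDiff

-- The entrywise sup norm is the product norm, so `contDiff_pi` applies.
attribute [local instance] Matrix.normedAddCommGroup Matrix.normedSpace

variable {𝕜 E : Type*} [NontriviallyNormedField 𝕜] [NormedAddCommGroup E] [NormedSpace 𝕜 E]
  {l m n : Type*} [Fintype l] [Fintype m] [Fintype n] {k : WithTop ℕ∞}

theorem contDiff_iff_entry {A : E → Matrix m n 𝕜} :
    ContDiff 𝕜 k A ↔ ∀ i j, ContDiff 𝕜 k fun x => A x i j :=
  contDiff_pi.trans <| forall_congr' fun _ => contDiff_pi

@[fun_prop]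
theorem _root_.ContDiff.matrix_transpose {A : E → Matrix m n 𝕜} (hA : ContDiff 𝕜 k A) :
    ContDiff 𝕜 k fun x => (A x)ᵀ :=
  contDiff_iff_entry.2 fun i j => contDiff_iff_entry.1 hA j i

@[fun_prop]
theorem _root_.ContDiff.matrix_mul {A : E → Matrix l m 𝕜} {B : E → Matrix m n 𝕜}
    (hA : ContDiff 𝕜 k A) (hB : ContDiff 𝕜 k B) : ContDiff 𝕜 k fun x => A x * B x :=
  contDiff_iff_entry.2 fun i j => ContDiff.sum fun r _ =>
    (contDiff_iff_entry.1 hA i r).mul (contDiff_iff_entry.1 hB r j)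

end ContDiff

theorem sq_entry_le_sum_sq {m n : Type*} [Fintype m] [Fintype n] (M : Matrix m n ℝ) (i : m)
    (j : n) : M i j ^ 2 ≤ ∑ k, ∑ l, M k l ^ 2 :=
  (Finset.single_le_sum (f := fun l => M i l ^ 2) (fun _ _ => sq_nonneg _)
    (Finset.mem_univ j)).trans <| Finset.single_le_sum (f := fun k => ∑ l, M k l ^ 2)
      (fun _ _ => Finset.sum_nonneg fun _ _ => sq_nonneg _) (Finset.mem_univ i)

end Matrix

section ConstraintViolation

variable {m n : Type*} [Fintype m] [Fintype n] [DecidableEq n]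

def constraintViolation (X : Matrix m n ℝ) : ℝ :=
  ∑ i, ∑ j, ((Xᵀ * X - 1 : Matrix n n ℝ) i j) ^ 2

theorem sq_entry_le_constraintViolation_add_two (X : Matrix m n ℝ) (i : m) (j : n) :
    X i j ^ 2 ≤ constraintViolation X + 2 := by
  set d := (Xᵀ * X - 1 : Matrix n n ℝ) j j
  have hdiag : ∑ r, X r j ^ 2 = d + 1 := by simp [d, Matrix.mul_apply, sq]
  have hentry : X i j ^ 2 ≤ ∑ r, X r j ^ 2 :=
    Finset.single_le_sum (f := fun r => X r j ^ 2) (fun _ _ => sq_nonneg _) (Finset.mem_univ i)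
  have hd : d ^ 2 ≤ constraintViolation X := (Xᵀ * X - 1 : Matrix n n ℝ).sq_entry_le_sum_sq j j
  nlinarith [sq_nonneg (d - 1)]

attribute [local instance] Matrix.normedAddCommGroup Matrix.normedSpace in
theorem contDiff_constraintViolation {k : WithTop ℕ∞} :
    ContDiff ℝ k (constraintViolation : Matrix m n ℝ → ℝ) :=
  ContDiff.sum fun i _ => ContDiff.sum fun j _ =>
    (Matrix.contDiff_iff_entry.1
      ((contDiff_id.matrix_transpose.matrix_mul contDiff_id).sub contDiff_const) i j).pow 2

end ConstraintViolation

section SupNorm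

attribute [local instance] Matrix.normedAddCommGroup Matrix.normedSpace

variable {n p : ℕ}

theorem norm_le_frobNorm (M : Matrix (Fin n) (Fin p) ℝ) : ‖M‖ ≤ frobNorm M :=
  (Matrix.norm_le_iff (Real.sqrt_nonneg _)).2 fun i j => by
    rw [Real.norm_eq_abs, ← Real.sqrt_sq_eq_abs]
    exact Real.sqrt_le_sqrt (M.sq_entry_le_sum_sq i j)

theorem frobNorm_le_sqrt_mul_norm (M : Matrix (Fin n) (Fin p) ℝ) :
    frobNorm M ≤ √(n * p) * ‖M‖ := by
  have hsum : ∑ i, ∑ j, M i j ^ 2 ≤ (n * p) * ‖M‖ ^ 2 := by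
    calc ∑ i, ∑ j, M i j ^ 2 ≤ ∑ _i : Fin n, ∑ _j : Fin p, ‖M‖ ^ 2 := by
          refine Finset.sum_le_sum fun i _ => Finset.sum_le_sum fun j _ => sq_le_sq.2 ?_
          simpa only [abs_norm, Real.norm_eq_abs] using M.norm_entry_le_entrywise_sup_norm
      _ = (n * p) * ‖M‖ ^ 2 := by simp [mul_assoc]
  calc frobNorm M ≤ √((n * p) * ‖M‖ ^ 2) := Real.sqrt_le_sqrt hsum
    _ = √(n * p) * ‖M‖ := by rw [Real.sqrt_mul (by positivity), Real.sqrt_sq (norm_nonneg _)]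

theorem exists_frobNorm_sub_le_of_contDiff {m q : ℕ}
    {F : Matrix (Fin m) (Fin q) ℝ → Matrix (Fin n) (Fin p) ℝ} (hF : ContDiff ℝ 1 F)
    (hc : HasCompactSupport F) :
    ∃ K : ℝ, 0 ≤ K ∧ ∀ X Y, frobNorm (F X - F Y) ≤ K * frobNorm (X - Y) := by
  obtain ⟨C, hC⟩ := ContDiff.lipschitzWith_of_hasCompactSupport hc hF one_ne_zero
  refine ⟨√(n * p) * C, by positivity, fun X Y => ?_⟩
  calc frobNorm (F X - F Y) ≤ √(n * p) * ‖F X - F Y‖ := frobNorm_le_sqrt_mul_norm _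
    _ ≤ √(n * p) * (C * ‖X - Y‖) := by gcongr; exact hC.norm_sub_le X Y
    _ ≤ √(n * p) * (C * frobNorm (X - Y)) := by gcongr; exact norm_le_frobNorm _
    _ = √(n * p) * C * frobNorm (X - Y) := by ring

theorem contDiff_cutoffField {ζ : ℝ → ℝ} (hζ : ContDiff ℝ 1 ζ) (u : Fin n) (v : Fin p) :
    ContDiff ℝ 1 (cutoffField ζ u v) := by
  unfold cutoffField
  exact (hζ.comp contDiff_constraintViolation).smul (by fun_prop)

theorem hasCompactSupport_cutoffField {ε : ℝ} {ζ : ℝ → ℝ} (hζ0 : ∀ t, 2 * ε ≤ t → ζ t = 0)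
    (u : Fin n) (v : Fin p) : HasCompactSupport (cutoffField ζ u v) := by
  refine HasCompactSupport.intro (isCompact_closedBall 0 √(2 * ε + 2)) fun X hX => ?_
  obtain ⟨i, j, hij⟩ : ∃ i j, √(2 * ε + 2) < |X i j| := by
    simpa [Matrix.norm_le_iff (Real.sqrt_nonneg _)] using hX
  have hbig : 2 * ε + 2 < X i j ^ 2 := by
    rw [← sq_abs]
    exact (Real.sqrt_lt' ((Real.sqrt_nonneg _).trans_lt hij)).1 hij
  have hviol := sq_entry_le_constraintViolation_add_two X i j
  change ζ (constraintViolation X) • (_ : Matrix (Fin n) (Fin p) ℝ) = 0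
  rw [hζ0 _ (by linarith), zero_smul]

end SupNorm

theorem cutoff_field_lipschitz_general (n p : ℕ)
    (ε : ℝ) (ζ : ℝ → ℝ) (hζ : ContDiff ℝ 1 ζ)
    (hζ0 : ∀ t : ℝ, 2 * ε ≤ t → ζ t = 0)
    (u : Fin n) (v : Fin p) :
    ∃ K : ℝ, 0 ≤ K ∧ ∀ X Y : Matrix (Fin n) (Fin p) ℝ,
      frobNorm (cutoffField ζ u v X - cutoffField ζ u v Y) ≤ K * frobNorm (X - Y) :=
  exists_frobNorm_sub_le_of_contDiff (contDiff_cutoffField hζ u v)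
    (hasCompactSupport_cutoffField hζ0 u v)

/-- if `ζ` is continuously differentiable and vanishes on `[2ε, ∞)`, then
the cutoff diffusion coefficient is globally Lipschitz with respect to the Frobenius
norm. -/
theorem cutoff_field_lipschitz (n p : ℕ) (hp : 1 ≤ p) (hpn : p ≤ n)
    (ε : ℝ) (hε : 0 < ε) (ζ : ℝ → ℝ) (hζ : ContDiff ℝ 1 ζ)
    (hζ0 : ∀ t : ℝ, 2 * ε ≤ t → ζ t = 0)
    (u : Fin n) (v : Fin p) :
    ∃ K : ℝ, 0 ≤ K ∧ ∀ X Y : Matrix (Fin n) (Fin p) ℝ,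
      frobNorm (cutoffField ζ u v X - cutoffField ζ u v Y) ≤ K * frobNorm (X - Y) :=
  cutoff_field_lipschitz_general n p ε ζ hζ hζ0 u v
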